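/- arXiv:2510.04263 — 2 statements merged into one kernel-verified Lean document; each statement's English description precedes it below -/
import Mathlib

section
/- In a DAG with vertex set V, if X is not an ancestor of Y, Y is not an ancestor of X, and X, Y are non-adjacent, then X and Y are d-separated by Parents(X) ∪ Parents(Y). -/
/-- Undirected adjacency induced by the directed edge relation. -/
def AdjE {V : Type*} (E : V → V → Prop) (a b : V) : Prop := E a b ∨ E b a

/-- `p` is a path (a list of distinct vertices, consecutive ones joined by an
edge in either direction) between `X` and `Y`. -/
def IsPathBetween {V : Type*} (E : V → V → Prop) (X Y : V) (p : List V) : Prop :=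
  p.Chain' (fun a b => E a b ∨ E b a) ∧ p.head? = some X ∧ p.getLast? = some Y ∧ p.Nodup

/-- `b` is an interior (non-endpoint) vertex of the path `p`. -/
def InteriorOn {V : Type*} (p : List V) (b : V) : Prop := ∃ a c, [a, b, c] <:+: p

/-- `b` is a collider on the path `p`: both adjacent edges of `p` point into `b`. -/
def ColliderOn {V : Type*} (E : V → V → Prop) (p : List V) (b : V) : Prop :=
  ∃ a c, [a, b, c] <:+: p ∧ E a b ∧ E c b

/-- `b` is a non-collider on `p`: an interior vertex that is not a collider. -/
def NonColliderOn {V : Type*} (E : V → V → Prop) (p : List V) (b : V) : Prop :=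
  InteriorOn p b ∧ ¬ ColliderOn E p b

/-- `b` is a descendant `d` relation: `Descend E b d` means there is a directed
path (possibly trivial) from `b` to `d`; in particular `b` is its own descendant. -/
def Descend {V : Type*} (E : V → V → Prop) (b d : V) : Prop := Relation.ReflTransGen E b d

/-- The path `p` is blocked by the set `Z`: it contains a non-collider in `Z`,
or a collider `b` with `b ∉ Z` and no descendant of `b` in `Z`. -/
def BlockedBy {V : Type*} (E : V → V → Prop) (p : List V) (Z : Set V) : Prop :=
  (∃ b, NonColliderOn E p b ∧ b ∈ Z) ∨
  (∃ b, ColliderOn E p b ∧ b ∉ Z ∧ ∀ d, Descend E b d → d ∉ Z)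

/-- `X` and `Y` are d-separated by `Z`: every path between them is blocked by `Z`. -/
def DSepBy {V : Type*} (E : V → V → Prop) (X Y : V) (Z : Set V) : Prop :=
  ∀ p, IsPathBetween E X Y p → BlockedBy E p Z

/-- The directed graph `E` is acyclic: no nontrivial directed path from a vertex
to itself. -/
def AcyclicRel {V : Type*} (E : V → V → Prop) : Prop := ∀ x, ¬ Relation.TransGen E x x

section Aux

variable {V : Type*} {E : V → V → Prop}

lemma infix3_reverse {p : List V} {a b c : V} (h : [a, b, c] <:+: p) :
    [c, b, a] <:+: p.reverse := by
  have := List.reverse_infix.mpr h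
  simpa using this

lemma collider_reverse {p : List V} {b : V} (h : ColliderOn E p.reverse b) :
    ColliderOn E p b := by
  obtain ⟨a, c, hin, h1, h2⟩ := h
  refine ⟨c, a, ?_, h2, h1⟩
  have := infix3_reverse hin
  simpa using this

lemma interior_reverse {p : List V} {b : V} (h : InteriorOn p.reverse b) :
    InteriorOn p b := by
  obtain ⟨a, c, hin⟩ := h
  refine ⟨c, a, ?_⟩
  have := infix3_reverse hin
  simpa using this

lemma collider_reverse' {p : List V} {b : V} (h : ColliderOn E p b) :
    ColliderOn E p.reverse b := by
  obtain ⟨a, c, hin, h1, h2⟩ := h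
  exact ⟨c, a, infix3_reverse hin, h2, h1⟩

lemma blocked_reverse {p : List V} {Z : Set V} (h : BlockedBy E p.reverse Z) :
    BlockedBy E p Z := by
  rcases h with ⟨b, ⟨hint, hnc⟩, hZ⟩ | ⟨b, hc, hnZ, hd⟩
  · exact Or.inl ⟨b, ⟨interior_reverse hint, fun hc => hnc (collider_reverse' hc)⟩, hZ⟩
  · exact Or.inr ⟨b, collider_reverse hc, hnZ, hd⟩

lemma infix_head_eq {rest : List V} {x v1 v2 a c : V}
    (hnd : (x :: v1 :: v2 :: rest).Nodup)
    (h : [a, v1, c] <:+: x :: v1 :: v2 :: rest) : a = x := by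
  obtain ⟨s, t, hst⟩ := h
  match s, hst with
  | [], hst =>
    simp only [List.nil_append, List.cons_append, List.cons.injEq] at hst
    exact hst.1
  | [w], hst =>
    simp only [List.cons_append, List.nil_append, List.cons.injEq] at hst
    -- hst : w = x ∧ a = v1 ∧ v1 = v2 ∧ ...
    exfalso
    have hv12 : v1 ≠ v2 := by
      simp only [List.nodup_cons, List.mem_cons] at hnd
      exact fun h => hnd.2.1 (Or.inl h)
    exact hv12 (hst.2.2.1)
  | w :: u :: s'', hst =>
    simp only [List.cons_append, List.cons.injEq] at hst
    exfalso
    obtain ⟨-, -, hrest⟩ := hst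
    have hmem : v1 ∈ v2 :: rest := by rw [← hrest]; simp
    have hn1 : v1 ∉ v2 :: rest := by
      simp only [List.nodup_cons] at hnd
      exact hnd.2.1
    exact hn1 hmem

lemma blocked_first (hacyc : AcyclicRel E) {Z : Set V} {x v1 v2 : V} {rest : List V}
    (hnd : (x :: v1 :: v2 :: rest).Nodup) (h1 : E v1 x) (hZ : v1 ∈ Z) :
    BlockedBy E (x :: v1 :: v2 :: rest) Z := by
  left
  refine ⟨v1, ⟨⟨x, v2, ⟨[], rest, by simp⟩⟩, ?_⟩, hZ⟩
  rintro ⟨a, c, hin, ha, hc⟩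
  have hax : a = x := infix_head_eq hnd hin
  subst hax
  exact hacyc a (Relation.TransGen.head ha (Relation.TransGen.single h1))

lemma exists_collider (hacyc : AcyclicRel E) {X : V} :
    ∀ (q : List V) (x y : V), E x y → Relation.TransGen E X y →
      List.Chain' (AdjE E) (x :: y :: q) →
      (∃ l a b, x :: y :: q = l ++ [a, b] ∧ E b a) →
      ∃ c, ColliderOn E (x :: y :: q) c ∧ Relation.TransGen E X c := by
  intro q
  induction q with
  | nil =>
    rintro x y hxy hXy _ ⟨l, a, b, hl, hba⟩
    exfalso
    have hlnil : l = [] := by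
      cases l with
      | nil => rfl
      | cons w l' =>
        exfalso
        have := congrArg List.length hl
        simp [List.length_append] at this
    subst hlnil
    simp only [List.nil_append, List.cons.injEq] at hl
    obtain ⟨hax, hby, -⟩ := hl
    subst hax; subst hby
    exact hacyc x (Relation.TransGen.head hxy (Relation.TransGen.single hba))
  | cons z q' ih =>
    rintro x y hxy hXy hch ⟨l, a, b, hl, hba⟩
    have hch' : List.Chain' (AdjE E) (y :: z :: q') := hch.tail
    have hadjyz : AdjE E y z := by
      rcases List.isChain_cons_cons.mp hch' with ⟨h, -⟩
      exact h
    by_cases hzy : E z y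
    · exact ⟨y, ⟨x, z, ⟨[], q', by simp⟩, hxy, hzy⟩, hXy⟩
    · have hyz : E y z := hadjyz.resolve_right hzy
      have hends : ∃ l', y :: z :: q' = l' ++ [a, b] := by
        cases l with
        | nil =>
          exfalso
          have := congrArg List.length hl
          simp at this
        | cons w l' =>
          refine ⟨l', ?_⟩
          simpa using congrArg List.tail hl
      obtain ⟨l', hl'⟩ := hends
      obtain ⟨c, hc, hXc⟩ := ih y z hyz (hXy.tail hyz) hch' ⟨l', a, b, hl', hba⟩
      refine ⟨c, ?_, hXc⟩
      obtain ⟨a', c', hin, h1, h2⟩ := hc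
      exact ⟨a', c', hin.trans (List.suffix_cons x _).isInfix, h1, h2⟩

lemma decomp3 (p : List V) (h : 3 ≤ p.length) : ∃ a b c r, p = a :: b :: c :: r := by
  match p with
  | a :: b :: c :: r => exact ⟨a, b, c, r, rfl⟩
  | [] | [_] | [_, _] => simp at h

end Aux

/-- In a DAG, if X is not an ancestor of Y, Y is not an ancestor of X, and X, Y
are non-adjacent, then X and Y are d-separated by Parents(X) ∪ Parents(Y). -/
theorem stmt_6 {V : Type*} [Fintype V] (E : V → V → Prop)
    (hacyc : AcyclicRel E) (X Y : V)
    (hadj : ¬ AdjE E X Y)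
    (hXY : ¬ Relation.ReflTransGen E X Y)
    (hYX : ¬ Relation.ReflTransGen E Y X) :
    DSepBy E X Y ({w | E w X} ∪ {w | E w Y}) := by
  intro p hp
  obtain ⟨hch, hh, hl, hnd⟩ := hp
  have hXneY : X ≠ Y := fun h => hXY (h ▸ Relation.ReflTransGen.refl)
  -- decompose p = X :: v1 :: v2 :: rest
  have h3 : 3 ≤ p.length := by
    match p, hh, hl with
    | [x], hh, hl =>
      exfalso
      simp only [List.head?_cons, Option.some.injEq] at hh
      simp only [List.getLast?_singleton, Option.some.injEq] at hl
      exact hXneY (hh ▸ hl ▸ rfl)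
    | [x, y], hh, hl =>
      exfalso
      simp only [List.head?_cons, Option.some.injEq] at hh
      have hy : y = Y := by simpa using hl
      have : AdjE E x y := by
        rcases List.isChain_cons_cons.mp hch with ⟨h, -⟩
        exact h
      exact hadj (hh ▸ hy ▸ this)
    | (_ :: _ :: _ :: _), _, _ => simp
  obtain ⟨x, v1, v2, rest, hpeq⟩ := decomp3 p h3
  subst hpeq
  have hx : x = X := by simpa using hh
  subst hx
  have hadj1 : AdjE E x v1 := by
    rcases List.isChain_cons_cons.mp hch with ⟨h, -⟩
    exact h
  by_cases h1 : E v1 x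
  · exact blocked_first hacyc hnd h1 (Or.inl h1)
  · have hXv1 : E x v1 := hadj1.resolve_right h1
    -- look at the reverse path
    have hhr : (x :: v1 :: v2 :: rest).reverse.head? = some Y := by
      rw [List.head?_reverse]; exact hl
    have h3r : 3 ≤ (x :: v1 :: v2 :: rest).reverse.length := by simp
    obtain ⟨y', u1, u2, r', hpr⟩ := decomp3 (x :: v1 :: v2 :: rest).reverse h3r
    have hy' : y' = Y := by rw [hpr] at hhr; simpa using hhr
    subst hy'
    have hndr : (x :: v1 :: v2 :: rest).reverse.Nodup := List.nodup_reverse.mpr hnd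
    have hchr : List.Chain' (AdjE E) (x :: v1 :: v2 :: rest).reverse := by
      rw [List.Chain', List.isChain_reverse]
      exact hch.imp (fun a b h => h.symm)
    have hadjY : AdjE E y' u1 := by
      rw [hpr] at hchr
      rcases List.isChain_cons_cons.mp hchr with ⟨h, -⟩
      exact h
    by_cases h2 : E u1 y'
    · have hb : BlockedBy E (y' :: u1 :: u2 :: r') ({w | E w x} ∪ {w | E w y'}) :=
        blocked_first hacyc (hpr ▸ hndr) h2 (Or.inr h2)
      rw [← hpr] at hb
      exact blocked_reverse hb
    · have hYu1 : E y' u1 := hadjY.resolve_right h2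
      have hends : ∃ l a b, x :: v1 :: v2 :: rest = l ++ [a, b] ∧ E b a := by
        refine ⟨(r'.reverse ++ [u2]), u1, y', ?_, hYu1⟩
        have hrev := congrArg List.reverse hpr
        simp only [List.reverse_reverse] at hrev
        rw [hrev]
        simp
      obtain ⟨c, hc, hXc⟩ := exists_collider hacyc (v2 :: rest) x v1 hXv1
        (Relation.TransGen.single hXv1) hch hends
      right
      have hdes : ∀ d, Descend E c d → d ∉ ({w | E w x} ∪ {w | E w y'} : Set V) := by
        rintro d hcd (hdX | hdY)
        · exact hacyc x ((hXc.trans_left hcd).tail hdX)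
        · exact hXY ((hXc.trans_left hcd).tail hdY).to_reflTransGen
      exact ⟨c, hc, hdes c Relation.ReflTransGen.refl, hdes⟩
end

section
/- In a DAG, any vertex X is d-separated from each of its non-descendants (other than its parents) by its set of parents. Equivalently, for every vertex Y that is not a descendant of X and not a parent of X and not X itself, every path from X to Y is blocked by Parents(X). -/
/-
Take a path `X = p₀, p₁, …, pₖ = Y`. If its first edge points into `X`, then `p₁` is a parent of
`X`; it is not `Y`, and it cannot be a collider, since that would need the edge `X → p₁` as well.
If the first edge points out of `X`, follow the path while its edges point forward: every vertex
reached is a descendant of `X`, and `Y` is not, so some edge turns back. The vertex where it turns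
is a collider that is a descendant of `X`, and by acyclicity neither it nor any of its
descendants is a parent of `X`.
-/

open Relation

section

variable {V : Type*} {E : V → V → Prop}

lemma List.eq_of_pair_infix_cons_cons {α : Type*} {x a v : α} {t : List α}
    (hnd : (x :: v :: t).Nodup) (h : [a, v] <:+: x :: v :: t) : a = x := by
  obtain ⟨_ | ⟨y, s⟩, u, h⟩ := h
  · simp_all
  · have hvt : v ∈ t := by
      simp only [cons_append, append_assoc, nil_append, cons.injEq] at h
      rcases s with _ | ⟨z, s⟩ <;> simp only [nil_append, cons_append, cons.injEq] at h
      · simp [← h.2.2]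
      · simp [← h.2.2]
    exact absurd hvt (nodup_cons.mp hnd.of_cons).1

lemma AcyclicRel.not_edge_of_descend (hacyc : AcyclicRel E) {x y : V} (h : Descend E x y) :
    ¬ E y x :=
  fun hyx => hacyc x (TransGen.tail' h hyx)

lemma ColliderOn.cons {p : List V} {c : V} (a : V) (h : ColliderOn E p c) :
    ColliderOn E (a :: p) c := by
  obtain ⟨u, w, hinf, hu, hw⟩ := h
  exact ⟨u, w, hinf.trans (List.suffix_cons a p).isInfix, hu, hw⟩

lemma exists_colliderOn_descend_of_edge {a b y : V} {rest : List V}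
    (hchain : (a :: b :: rest).IsChain (AdjE E)) (hab : E a b)
    (hlast : (a :: b :: rest).getLast? = some y) (hy : ¬ Descend E b y) :
    ∃ c, ColliderOn E (a :: b :: rest) c ∧ Descend E b c := by
  induction rest generalizing a b with
  | nil =>
    obtain rfl : b = y := by simpa using hlast
    exact absurd .refl hy
  | cons d rest ih =>
    have hchain' := (List.isChain_cons_cons.mp hchain).2
    rcases (List.isChain_cons_cons.mp hchain').1 with hbd | hdb
    · obtain ⟨c, hc, hdc⟩ := ih hchain' hbd (by simpa using hlast)
        (fun hdy => hy (.head hbd hdy))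
      exact ⟨c, hc.cons a, .head hbd hdc⟩
    · exact ⟨b, ⟨a, d, (List.prefix_append [a, b, d] rest).isInfix, hab, hdb⟩, .refl⟩

lemma nonColliderOn_of_edge_to_head (hacyc : AcyclicRel E) {x v c : V} {t : List V}
    (hnd : (x :: v :: c :: t).Nodup) (hvx : E v x) : NonColliderOn E (x :: v :: c :: t) v := by
  refine ⟨⟨x, c, (List.prefix_append [x, v, c] t).isInfix⟩, ?_⟩
  rintro ⟨a, c', hinf, hav, -⟩
  obtain rfl : a = x :=
    List.eq_of_pair_infix_cons_cons hnd ((List.prefix_append [a, v] [c']).isInfix.trans hinf)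
  exact hacyc.not_edge_of_descend (.single hvx) hav

end

theorem stmt_7_general {V : Type*} (E : V → V → Prop)
    (hacyc : AcyclicRel E) (X Y : V)
    (hdesc : ¬ Descend E X Y) (hpar : ¬ E Y X) :
    DSepBy E X Y {w | E w X} := by
  rintro p ⟨hchain, hhead, hlast, hnd⟩
  obtain ⟨v, rest, rfl⟩ : ∃ v rest, p = X :: v :: rest := by
    match p with
    | [] => simp at hhead
    | [x] =>
      obtain ⟨rfl, rfl⟩ : x = X ∧ x = Y := by simp_all
      exact absurd .refl hdesc
    | x :: v :: rest => exact ⟨v, rest, by simp_all⟩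
  rcases (List.isChain_cons_cons.mp hchain).1 with hXv | hvX
  · obtain ⟨c, hc, hvc⟩ := exists_colliderOn_descend_of_edge hchain hXv hlast
      (fun hvY => hdesc (.head hXv hvY))
    have hXc : Descend E X c := .head hXv hvc
    exact .inr ⟨c, hc, hacyc.not_edge_of_descend hXc,
      fun d hcd => hacyc.not_edge_of_descend (hXc.trans hcd)⟩
  · obtain ⟨c, t, rfl⟩ : ∃ c t, rest = c :: t := by
      match rest with
      | [] => exact absurd (by simpa using hlast : v = Y) (fun hvY => hpar (hvY ▸ hvX))
      | c :: t => exact ⟨c, t, rfl⟩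
    exact .inl ⟨v, nonColliderOn_of_edge_to_head hacyc hnd hvX, hvX⟩

/-- Local Markov property: in a DAG, any vertex X is d-separated from each of
its non-descendants (other than its parents and itself) by its set of parents. -/
theorem stmt_7 {V : Type*} [Fintype V] (E : V → V → Prop)
    (hacyc : AcyclicRel E) (X Y : V)
    (hdesc : ¬ Descend E X Y) (hpar : ¬ E Y X) (hne : Y ≠ X) :
    DSepBy E X Y {w | E w X} :=
  stmt_7_general E hacyc X Y hdesc hpar
end
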